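/- arXiv:0807.2267 — 2 statements merged into one kernel-verified Lean document; each statement's English description precedes it below -/
import Mathlib

section
/- Let S be an ordered abelian semigroup satisfying the conditions of class G_p (a > b implies a^p > b^p, and a^p ≥ a). Then a word w = u_1 ⊗ ... ⊗ u_r over S is a Lyndon word if and only if the word w^{(p)} = u_1^p ⊗ ... ⊗ u_r^p is a Lyndon word. -/
/-- The `(n+1)`-st power of an element of a semigroup: `spow a n = a^(n+1)`. -/
def spow {S : Type*} [Mul S] (a : S) : ℕ → S
  | 0 => a
  | n + 1 => a * spow a n

/-- A Lyndon word: nonempty, lexicographically smaller than each proper right factor. -/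
def IsLyndon {S : Type*} [LT S] (w : List S) : Prop :=
  w ≠ [] ∧ ∀ u v : List S, w = u ++ v → u ≠ [] → v ≠ [] → List.Lex (· < ·) w v

private lemma lex_map_of_lex {S : Type*} [LinearOrder S] (f : S → S)
    (hf : ∀ a b : S, b < a → f b < f a) {l₁ l₂ : List S}
    (h : List.Lex (· < ·) l₁ l₂) :
    List.Lex (· < ·) (l₁.map f) (l₂.map f) := by
  induction h with
  | nil => exact List.Lex.nil
  | rel hr => exact List.Lex.rel (hf _ _ hr)
  | cons _ ih => exact List.Lex.cons ih

private lemma lex_map_iff {S : Type*} [LinearOrder S] (f : S → S)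
    (hf : ∀ a b : S, b < a → f b < f a) (l₁ l₂ : List S) :
    List.Lex (· < ·) (l₁.map f) (l₂.map f) ↔ List.Lex (· < ·) l₁ l₂ := by
  refine ⟨fun h => ?_, lex_map_of_lex f hf⟩
  rcases trichotomous_of (List.Lex (· < · : S → S → Prop)) l₁ l₂ with h' | h' | h'
  · exact h'
  · subst h'; exact absurd h (asymm h)
  · exact absurd h (asymm (lex_map_of_lex f hf h'))

private lemma isLyndon_map_iff {S : Type*} [LinearOrder S] (f : S → S)
    (hf : ∀ a b : S, b < a → f b < f a) (w : List S) :
    IsLyndon w ↔ IsLyndon (w.map f) := by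
  constructor
  · rintro ⟨hne, h⟩
    refine ⟨by simpa using hne, ?_⟩
    intro u v huv hu hv
    rcases List.map_eq_append_iff.mp huv with ⟨u', v', hw, hu', hv'⟩
    subst hu'; subst hv'
    have := h u' v' hw (by simpa using hu) (by simpa using hv)
    have h3 := lex_map_of_lex f hf this
    exact h3
  · rintro ⟨hne, h⟩
    refine ⟨by simpa using hne, ?_⟩
    intro u v huv hu hv
    have := h (u.map f) (v.map f) (by rw [huv, List.map_append])
      (by simpa using hu) (by simpa using hv)
    rw [huv] at this ⊢
    rw [List.map_append] at this
    exact (lex_map_iff f hf _ _).mp (by simpa using this)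

/-- In an ordered abelian semigroup of class `G_p` (`a > b → a^p > b^p` and `a^p ≥ a`),
a word `w = u₁ ⊗ ⋯ ⊗ u_r` is a Lyndon word iff `w^{(p)} = u₁^p ⊗ ⋯ ⊗ u_r^p` is. -/
theorem isLyndon_map_pth_power_iff {S : Type*} [CommSemigroup S] [LinearOrder S]
    (p : ℕ) (hp : p.Prime)
    (h1 : ∀ a b : S, b < a → spow b (p - 1) < spow a (p - 1))
    (h2 : ∀ a : S, a ≤ spow a (p - 1)) (w : List S) :
    IsLyndon w ↔ IsLyndon (w.map fun a => spow a (p - 1)) := by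
  exact isLyndon_map_iff _ h1 w
end

section
/- Let S be a well-ordered abelian semigroup satisfying: a > b implies a^p > b^p, and a^p ≥ a for all a, b. Then the set of p-divisible elements of S (elements that are p^r-th powers for every r ≥ 1) equals the set of p-idempotent elements {g ∈ S : g^p = g}. -/
lemma spow_mul_spow {S : Type*} [Semigroup S] (a : S) (m n : ℕ) :
    spow a m * spow a n = spow a (m + n + 1) := by
  induction m with
  | zero => rw [Nat.zero_add]; rfl
  | succ m ih =>
    show a * spow a m * spow a n = spow a (m + 1 + n + 1)
    rw [mul_assoc, ih, show m + 1 + n + 1 = (m + n + 1) + 1 from by omega]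
    rfl

lemma spow_spow {S : Type*} [Semigroup S] (a : S) (m n : ℕ) :
    spow (spow a m) n = spow a (m + n + m * n) := by
  induction n with
  | zero => simp [spow]
  | succ n ih =>
    show spow a m * spow (spow a m) n = _
    rw [ih, spow_mul_spow]
    congr 1
    ring

lemma pow_arith (p : ℕ) (hp : 1 ≤ p) (r : ℕ) :
    (p ^ r - 1) + (p - 1) + (p ^ r - 1) * (p - 1) = p ^ (r + 1) - 1 := by
  obtain ⟨p', rfl⟩ : ∃ p', p = p' + 1 := ⟨p - 1, by omega⟩
  obtain ⟨a, ha⟩ : ∃ a, (p' + 1) ^ r = a + 1 :=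
    ⟨(p' + 1) ^ r - 1, by have := Nat.one_le_pow r (p' + 1) (by omega); omega⟩
  rw [pow_succ, ha]
  have h : (a + 1) * (p' + 1) = (a + p' + a * p') + 1 := by ring
  rw [h]
  simp only [Nat.add_sub_cancel]

/-- In a well-ordered abelian semigroup with `a > b → a^p > b^p` and `a^p ≥ a`,
the set of `p`-divisible elements (elements that are `p^r`-th powers for every `r ≥ 1`)
equals the set of `p`-idempotent elements `{g : g^p = g}`. -/
theorem pDivisible_eq_pIdempotent {S : Type*} [CommSemigroup S] [LinearOrder S]
    [WellFoundedLT S] (p : ℕ) (hp : p.Prime)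
    (h1 : ∀ a b : S, b < a → spow b (p - 1) < spow a (p - 1))
    (h2 : ∀ a : S, a ≤ spow a (p - 1)) :
    {g : S | ∀ r : ℕ, 1 ≤ r → ∃ u : S, spow u (p ^ r - 1) = g}
      = {g : S | spow g (p - 1) = g} := by
  have hp1 : 1 ≤ p := hp.one_lt.le
  have hinj : ∀ a b : S, spow a (p - 1) = spow b (p - 1) → a = b := by
    intro a b hab
    rcases lt_trichotomy a b with h | h | h
    · exact absurd hab (h1 b a h).ne
    · exact h
    · exact absurd hab (h1 a b h).ne'
  have hstep : ∀ (u : S) (r : ℕ), spow (spow u (p ^ r - 1)) (p - 1) = spow u (p ^ (r + 1) - 1) := by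
    intro u r
    rw [spow_spow, pow_arith p hp1 r]
  ext g
  simp only [Set.mem_setOf_eq]
  constructor
  · intro hdiv
    induction g using WellFoundedLT.induction with
    | _ g IH =>
      obtain ⟨v, hv⟩ := hdiv 1 le_rfl
      rw [pow_one] at hv
      have hvle : v ≤ g := hv ▸ h2 v
      rcases eq_or_lt_of_le hvle with h | h
      · rw [← h] at hv ⊢; exact hv
      · have hvdiv : ∀ r : ℕ, 1 ≤ r → ∃ u : S, spow u (p ^ r - 1) = v := by
          intro r hr
          obtain ⟨w, hw⟩ := hdiv (r + 1) (by omega)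
          refine ⟨w, hinj _ _ ?_⟩
          rw [hstep, hw, hv]
        have := IH v h hvdiv
        rw [this] at hv
        rw [← hv]
        exact this
  · intro hg r hr
    refine ⟨g, ?_⟩
    induction r with
    | zero => omega
    | succ r ih =>
      rcases Nat.eq_or_lt_of_le hr with h | h
      · rw [← h, pow_one]; exact hg
      · rw [← hstep, ih (by omega), hg]
end
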